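/- arXiv:2412.13371 — 2 statements merged into one kernel-verified Lean document; each statement's English description precedes it below -/
import Mathlib

section
/- For the system of Test 1, the map π(ω₁,ω₂) = ( (ω₁ − aω₂)/(1+a²), ((1+a²)ω₁² − 3aω₁ω₂ + 3a²ω₂²)/(1 + 5a² + 4a⁴) ) satisfies the invariance PDE Dπ(ω)·s(ω) = f(π(ω), ℓ(ω)) for all ω ∈ ℝ², where s(ω) = (aω₂, −aω₁), ℓ(ω) = ω₁, and f(x,u) = (−x₁ + u, −x₂ + x₁u). -/
noncomputable def test1_pi (a : ℝ) : ℝ × ℝ → ℝ × ℝ := fun ω =>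
  ((ω.1 - a * ω.2) / (1 + a ^ 2),
   ((1 + a ^ 2) * ω.1 ^ 2 - 3 * a * ω.1 * ω.2 + 3 * a ^ 2 * ω.2 ^ 2) /
     (1 + 5 * a ^ 2 + 4 * a ^ 4))

def test1_s (a : ℝ) : ℝ × ℝ → ℝ × ℝ := fun ω => (a * ω.2, -a * ω.1)

def test1_ell : ℝ × ℝ → ℝ := fun ω => ω.1

def test1_f : ℝ × ℝ → ℝ → ℝ × ℝ := fun x u => (-x.1 + u, -x.2 + x.1 * u)

theorem test1_invariance (a : ℝ) (ω : ℝ × ℝ) :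
    fderiv ℝ (test1_pi a) ω (test1_s a ω)
      = test1_f (test1_pi a ω) (test1_ell ω) := by
  have hd1 : (1 + a ^ 2) ≠ 0 := by positivity
  have hd2 : (1 + 5 * a ^ 2 + 4 * a ^ 4) ≠ 0 := by positivity
  set F := ContinuousLinearMap.fst ℝ ℝ ℝ
  set S := ContinuousLinearMap.snd ℝ ℝ ℝ
  have h1 : HasFDerivAt (fun ω : ℝ × ℝ => (ω.1 - a * ω.2) / (1 + a ^ 2))
      ((1 + a ^ 2)⁻¹ • (F - a • S)) ω := by
    have : HasFDerivAt (fun ω : ℝ × ℝ => ω.1 - a * ω.2) (F - a • S) ω :=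
      (hasFDerivAt_fst).sub ((hasFDerivAt_snd).const_mul a)
    simpa [div_eq_inv_mul] using this.const_mul (1 + a ^ 2)⁻¹
  have h2 : HasFDerivAt (fun ω : ℝ × ℝ =>
      ((1 + a ^ 2) * ω.1 ^ 2 - 3 * a * ω.1 * ω.2 + 3 * a ^ 2 * ω.2 ^ 2) /
        (1 + 5 * a ^ 2 + 4 * a ^ 4))
      ((1 + 5 * a ^ 2 + 4 * a ^ 4)⁻¹ •
        (((2 * (1 + a ^ 2) * ω.1 - 3 * a * ω.2) • F)
          + ((- (3 * a * ω.1) + 6 * a ^ 2 * ω.2) • S))) ω := by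
    have hfst := hasFDerivAt_fst (𝕜 := ℝ) (p := ω) (E := ℝ) (F := ℝ)
    have hsnd := hasFDerivAt_snd (𝕜 := ℝ) (p := ω) (E := ℝ) (F := ℝ)
    have hsq1 : HasFDerivAt (fun ω : ℝ × ℝ => (1 + a ^ 2) * ω.1 ^ 2)
        ((2 * (1 + a ^ 2) * ω.1) • F) ω := by
      have := ((hfst.mul hfst).const_mul (1 + a ^ 2))
      convert this using 1
      all_goals first
      | (refine ContinuousLinearMap.ext fun v => ?_
         simp only [ContinuousLinearMap.smul_apply, ContinuousLinearMap.add_apply,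
          ContinuousLinearMap.sub_apply, ContinuousLinearMap.coe_smul', Pi.smul_apply,
          ContinuousLinearMap.coe_fst', ContinuousLinearMap.coe_snd', smul_eq_mul, F, S]
         ring)
      | (funext y; simp only [Pi.mul_apply]; ring)
      | rfl
    have hmix : HasFDerivAt (fun ω : ℝ × ℝ => 3 * a * ω.1 * ω.2)
        ((3 * a * ω.2) • F + (3 * a * ω.1) • S) ω := by
      have := ((hfst.const_mul (3 * a)).mul hsnd)
      convert this using 1
      all_goals first
      | (refine ContinuousLinearMap.ext fun v => ?_
         simp only [ContinuousLinearMap.smul_apply, ContinuousLinearMap.add_apply,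
          ContinuousLinearMap.sub_apply, ContinuousLinearMap.coe_smul', Pi.smul_apply,
          ContinuousLinearMap.coe_fst', ContinuousLinearMap.coe_snd', smul_eq_mul, F, S]
         ring)
      | (funext y; simp only [Pi.mul_apply]; ring)
      | rfl
    have hsq2 : HasFDerivAt (fun ω : ℝ × ℝ => 3 * a ^ 2 * ω.2 ^ 2)
        ((6 * a ^ 2 * ω.2) • S) ω := by
      have := ((hsnd.mul hsnd).const_mul (3 * a ^ 2))
      convert this using 1
      all_goals first
      | (refine ContinuousLinearMap.ext fun v => ?_
         simp only [ContinuousLinearMap.smul_apply, ContinuousLinearMap.add_apply,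
          ContinuousLinearMap.sub_apply, ContinuousLinearMap.coe_smul', Pi.smul_apply,
          ContinuousLinearMap.coe_fst', ContinuousLinearMap.coe_snd', smul_eq_mul, F, S]
         ring)
      | (funext y; simp only [Pi.mul_apply]; ring)
      | rfl
    have := ((hsq1.sub hmix).add hsq2).const_mul (1 + 5 * a ^ 2 + 4 * a ^ 4)⁻¹
    have h := this
    convert h using 1
    all_goals first
    | rfl
    | (refine ContinuousLinearMap.ext fun v => ?_
       simp only [ContinuousLinearMap.smul_apply, ContinuousLinearMap.add_apply,
        ContinuousLinearMap.sub_apply, ContinuousLinearMap.coe_smul', Pi.smul_apply,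
        ContinuousLinearMap.coe_fst', ContinuousLinearMap.coe_snd', smul_eq_mul, F, S]
       ring)
    | (ext ω'; simp [div_eq_inv_mul])
  have hpi : HasFDerivAt (test1_pi a)
      (((1 + a ^ 2)⁻¹ • (F - a • S)).prod
        ((1 + 5 * a ^ 2 + 4 * a ^ 4)⁻¹ •
          (((2 * (1 + a ^ 2) * ω.1 - 3 * a * ω.2) • F)
            + ((- (3 * a * ω.1) + 6 * a ^ 2 * ω.2) • S)))) ω := h1.prodMk h2
  rw [hpi.fderiv]
  simp only [test1_pi, test1_s, test1_ell, test1_f, ContinuousLinearMap.prod_apply,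
    ContinuousLinearMap.smul_apply, ContinuousLinearMap.sub_apply,
    ContinuousLinearMap.add_apply, ContinuousLinearMap.coe_smul',
    Pi.smul_apply, ContinuousLinearMap.coe_fst', ContinuousLinearMap.coe_snd', F, S]
  rw [Prod.mk.injEq]
  constructor <;> (simp only [smul_eq_mul]; field_simp; ring)
end

section
/- For the cart-pendulum system of Test 2, the linear map π(ω) = (ω₁, kω₁, ω₂, kω₂) satisfies the invariance PDE Dπ(ω)·s(ω) = f(π(ω), ℓ(ω)) for all ω in the domain where 1 + k a₂ cos(ω₁) ≠ 0, where s(ω) = (ω₂, a₁ sin(ω₁)/(1 + k a₂ cos(ω₁))), ℓ(ω) = k a₁ sin(ω₁)/(1 + k a₂ cos(ω₁)), and f(x,u) = (x₃, x₄, a₁ sin(x₁) − a₂ cos(x₁) u, u). -/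
open Real

noncomputable def cart_pi (k : ℝ) : ℝ × ℝ → Fin 4 → ℝ := fun ω =>
  ![ω.1, k * ω.1, ω.2, k * ω.2]

noncomputable def cart_s (a₁ a₂ k : ℝ) : ℝ × ℝ → ℝ × ℝ := fun ω =>
  (ω.2, a₁ * Real.sin ω.1 / (1 + k * a₂ * Real.cos ω.1))

noncomputable def cart_ell (a₁ a₂ k : ℝ) : ℝ × ℝ → ℝ := fun ω =>
  k * a₁ * Real.sin ω.1 / (1 + k * a₂ * Real.cos ω.1)

noncomputable def cart_f (a₁ a₂ : ℝ) : (Fin 4 → ℝ) → ℝ → Fin 4 → ℝ := fun x u =>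
  ![x 2, x 3, a₁ * Real.sin (x 0) - a₂ * Real.cos (x 0) * u, u]

lemma cart_pi_linear (k : ℝ) : IsBoundedLinearMap ℝ (cart_pi k) := by
  constructor
  · constructor
    · intro x y
      funext i
      fin_cases i <;> simp [cart_pi] <;> ring
    · intro c x
      funext i
      fin_cases i <;> simp [cart_pi] <;> ring
  · refine ⟨1 + |k|, by positivity, fun x => ?_⟩
    have hx1 : |x.1| ≤ ‖x‖ := norm_fst_le x
    have hx2 : |x.2| ≤ ‖x‖ := norm_snd_le x
    have hn : 0 ≤ ‖x‖ := norm_nonneg x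
    rw [pi_norm_le_iff_of_nonneg (by positivity)]
    intro i
    fin_cases i <;> simp [cart_pi, abs_mul] <;> nlinarith [abs_nonneg k, abs_nonneg x.1, abs_nonneg x.2]

theorem cart_pendulum_invariance (a₁ a₂ k : ℝ) (ha₁ : 0 < a₁) (ha₂ : 0 < a₂)
    (ω : ℝ × ℝ) (hdom : 1 + k * a₂ * Real.cos ω.1 ≠ 0) :
    fderiv ℝ (cart_pi k) ω (cart_s a₁ a₂ k ω)
      = cart_f a₁ a₂ (cart_pi k ω) (cart_ell a₁ a₂ k ω) := by
  rw [(cart_pi_linear k).fderiv]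
  show cart_pi k (cart_s a₁ a₂ k ω) = _
  funext i
  fin_cases i <;> simp [cart_pi, cart_s, cart_f, cart_ell] <;> field_simp <;> ring
end
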